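/- arXiv:2110.09285 — 4 statements merged into one kernel-verified Lean document; each statement's English description precedes it below -/
import Mathlib

section
/- Let ⟨xₙ⟩_{n=1}^∞ be a sequence in ℕ and let A be an IP* set in (ℕ,+). Then there exists a sum subsystem ⟨yₙ⟩_{n=1}^∞ of ⟨xₙ⟩_{n=1}^∞ such that FS(⟨yₙ⟩_{n=1}^∞) ∪ FP(⟨yₙ⟩_{n=1}^∞) ⊆ A. -/
/-!
Take an idempotent ultrafilter `U` on `(ℕ, +)` that contains every tail `FS(⟨xₙ⟩_{n ≥ N})`.
IP* sets are exactly the sets belonging to every idempotent ultrafilter, so `A ∈ U`, and IP* sets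
are closed under finite intersections and under preimages by `m ↦ b * m`. Choose the blocks one
at a time, keeping a set `S ∈ U` and an IP* set `P`, both initially `A`: the next term `y` is the
sum of `x` over a block beyond the previous ones with `y ∈ S ∩ P` and `(y + ·)⁻¹' S ∈ U` (possible
because `U + U = U`), after which `S` becomes `S ∩ (y + ·)⁻¹' S` and `P` becomes `P ∩ (y * ·)⁻¹' P`.
Every finite sum of the chosen terms then lies in the initial `S`, and every finite product in
the initial `P`.
-/

/-- `FS x` is the set of all finite sums `∑_{t ∈ H} x t` over nonempty finite `H ⊆ ℕ`. -/
def FS (x : ℕ → ℕ) : Set ℕ :=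
  {m | ∃ H : Finset ℕ, H.Nonempty ∧ m = ∑ t ∈ H, x t}

/-- `FP x` is the set of all finite products `∏_{t ∈ H} x t` over nonempty finite `H ⊆ ℕ`. -/
def FP (x : ℕ → ℕ) : Set ℕ :=
  {m | ∃ H : Finset ℕ, H.Nonempty ∧ m = ∏ t ∈ H, x t}

/-- `A` is an IP* set in `(ℕ,+)`: it meets `FS z` for every sequence `z`. -/
def IsIPStar (A : Set ℕ) : Prop :=
  ∀ z : ℕ → ℕ, (A ∩ FS z).Nonempty

/-- `y` is a sum subsystem of `x`: there are nonempty finite sets `Hₙ` with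
`max Hₙ < min Hₙ₊₁` and `yₙ = ∑_{t ∈ Hₙ} x t`. -/
def IsSumSubsystem (y x : ℕ → ℕ) : Prop :=
  ∃ H : ℕ → Finset ℕ, ∃ hne : ∀ n, (H n).Nonempty,
    (∀ n, (H n).max' (hne n) < (H (n + 1)).min' (hne (n + 1))) ∧
    ∀ n, y n = ∑ t ∈ H n, x t

open Filter

attribute [local instance] Ultrafilter.add Ultrafilter.addSemigroup

namespace Hindman

theorem exists_idempotent_ultrafilter_forall_FS_drop {M : Type*} [AddSemigroup M]
    (a : Stream' M) : ∃ U : Ultrafilter M, U + U = U ∧ ∀ n, ∀ᶠ m in U, m ∈ FS (a.drop n) := by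
  let S : Set (Ultrafilter M) := ⋂ n, {U | ∀ᶠ m in U, m ∈ FS (a.drop n)}
  have h := exists_idempotent_in_compact_add_subsemigroup ?_ S ?_ ?_ ?_
  · obtain ⟨U, hU, U_idem⟩ := h
    exact ⟨U, U_idem, Set.mem_iInter.mp hU⟩
  · exact Ultrafilter.continuous_add_left
  · apply IsCompact.nonempty_iInter_of_sequence_nonempty_isCompact_isClosed
    · intro n U hU
      filter_upwards [hU]
      rw [← Stream'.drop_drop, ← Stream'.tail_eq_drop]
      exact FS.tail _
    · exact fun n => ⟨pure _, mem_pure.mpr <| FS.head _⟩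
    · exact (ultrafilter_isClosed_basic _).isCompact
    · exact fun n => ultrafilter_isClosed_basic _
  · exact (isClosed_iInter fun _ => ultrafilter_isClosed_basic _).isCompact
  · intro U hU V hV
    rw [Set.mem_iInter] at *
    intro n
    rw [Set.mem_ofPred_eq, Ultrafilter.eventually_add]
    filter_upwards [hU n] with m hm
    obtain ⟨n', hn⟩ := FS.add hm
    filter_upwards [hV (n + n')] with m' hm'
    apply hn
    simpa only [Stream'.drop_drop] using hm'

@[to_additive FS_drop_subset_of_forall_add_mem]
theorem FP_drop_subset_of_forall_mul_mem {M : Type*} [Semigroup M] {a : Stream' M}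
    {s : ℕ → Set M} (get_mem : ∀ n, a.get n ∈ s n) (succ_subset : ∀ n, s (n + 1) ⊆ s n)
    (get_mul_mem : ∀ n, ∀ m ∈ s (n + 1), a.get n * m ∈ s n) (n : ℕ) :
    FP (a.drop n) ⊆ s n := by
  intro m hm
  generalize hb : a.drop n = b at hm
  induction hm generalizing n with
  | head' b =>
    subst hb
    simpa only [Stream'.head_drop] using get_mem n
  | tail' b m _ ih =>
    subst hb
    exact succ_subset n (ih (n + 1) Stream'.tail_drop'.symm)
  | cons' b m _ ih =>
    subst hb
    rw [Stream'.head_drop]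
    exact get_mul_mem n m (ih (n + 1) Stream'.tail_drop'.symm)

theorem exists_finset_sum_eq_of_mem_FS_drop {M : Type*} [AddCommMonoid M] {a : Stream' M}
    {n : ℕ} {m : M} (hm : m ∈ FS (a.drop n)) :
    ∃ H : Finset ℕ, H.Nonempty ∧ (∀ t ∈ H, n ≤ t) ∧ m = ∑ t ∈ H, a.get t := by
  generalize hb : a.drop n = b at hm
  induction hm generalizing n with
  | head' b =>
    subst hb
    exact ⟨{n}, Finset.singleton_nonempty n, by simp, by simp⟩
  | tail' b m _ ih =>
    subst hb
    obtain ⟨H, hne, hge, rfl⟩ := ih Stream'.tail_drop'.symm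
    exact ⟨H, hne, fun t ht => (hge t ht).trans' n.le_succ, rfl⟩
  | cons' b m _ ih =>
    subst hb
    obtain ⟨H, hne, hge, rfl⟩ := ih Stream'.tail_drop'.symm
    have hn : n ∉ H := fun hn => by simpa using hge n hn
    refine ⟨insert n H, Finset.insert_nonempty n H, ?_, ?_⟩
    · simpa using fun t ht => (hge t ht).trans' n.le_succ
    · rw [Finset.sum_insert hn, Stream'.head_drop]

end Hindman

theorem isIPStar_iff_forall_idempotent {A : Set ℕ} :
    IsIPStar A ↔ ∀ U : Ultrafilter ℕ, U + U = U → A ∈ U := by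
  constructor
  · intro hA U hU
    by_contra hAU
    obtain ⟨z, hz⟩ := Hindman.exists_FS_of_large U hU Aᶜ (Ultrafilter.compl_mem_iff_notMem.2 hAU)
    obtain ⟨m, hmA, H, hH, rfl⟩ := hA z
    exact hz (Hindman.FS.finsetSum z H hH) hmA
  · intro h z
    obtain ⟨U, hU, hz⟩ := Hindman.exists_idempotent_ultrafilter_forall_FS_drop (z : Stream' ℕ)
    obtain ⟨m, hmA, hmz⟩ := Ultrafilter.nonempty_of_mem (inter_mem (h U hU) (hz 0))
    obtain ⟨H, hH, -, rfl⟩ := Hindman.exists_finset_sum_eq_of_mem_FS_drop hmz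
    exact ⟨_, hmA, H, hH, rfl⟩

theorem IsIPStar.inter {A B : Set ℕ} (hA : IsIPStar A) (hB : IsIPStar B) : IsIPStar (A ∩ B) :=
  isIPStar_iff_forall_idempotent.2 fun U hU =>
    inter_mem (isIPStar_iff_forall_idempotent.1 hA U hU) (isIPStar_iff_forall_idempotent.1 hB U hU)

theorem IsIPStar.preimage_mul_left {A : Set ℕ} (hA : IsIPStar A) (b : ℕ) :
    IsIPStar ((b * ·) ⁻¹' A) := by
  intro z
  obtain ⟨m, hmA, H, hH, rfl⟩ := hA (fun n => b * z n)
  exact ⟨∑ t ∈ H, z t, by simpa [Finset.mul_sum] using hmA, H, hH, rfl⟩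

structure SubsystemStage (U : Ultrafilter ℕ) where
  sums : Set ℕ
  sums_mem : sums ∈ U
  prods : Set ℕ
  isIPStar_prods : IsIPStar prods
  start : ℕ

namespace SubsystemStage

variable {U : Ultrafilter ℕ} {x : ℕ → ℕ}

theorem exists_block (hU : U + U = U)
    (hx : ∀ n, ∀ᶠ m in U, m ∈ Hindman.FS (Stream'.drop n x)) (p : SubsystemStage U) :
    ∃ H : Finset ℕ, H.Nonempty ∧ (∀ t ∈ H, p.start ≤ t) ∧ ∑ t ∈ H, x t ∈ p.sums ∧
      (∀ᶠ m in U, ∑ t ∈ H, x t + m ∈ p.sums) ∧ ∑ t ∈ H, x t ∈ p.prods := by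
  have sums_star : ∀ᶠ m in U, ∀ᶠ m' in U, m + m' ∈ p.sums := by
    rw [← Ultrafilter.eventually_add, hU]
    exact p.sums_mem
  have sums_mem : ∀ᶠ m in U, m ∈ p.sums := p.sums_mem
  have prods_mem : ∀ᶠ m in U, m ∈ p.prods :=
    isIPStar_iff_forall_idempotent.1 p.isIPStar_prods U hU
  obtain ⟨m, ⟨⟨hm, hm_star⟩, hm_prods⟩, hm_FS⟩ :=
    (((sums_mem.and sums_star).and prods_mem).and (hx p.start)).exists
  obtain ⟨H, hH, hH_start, rfl⟩ := Hindman.exists_finset_sum_eq_of_mem_FS_drop hm_FS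
  exact ⟨H, hH, hH_start, hm, hm_star, hm_prods⟩

variable (hU : U + U = U) (hx : ∀ n, ∀ᶠ m in U, m ∈ Hindman.FS (Stream'.drop n x))

noncomputable def block (p : SubsystemStage U) : Finset ℕ :=
  (p.exists_block hU hx).choose

noncomputable def blockSum (p : SubsystemStage U) : ℕ :=
  ∑ t ∈ p.block hU hx, x t

theorem block_nonempty (p : SubsystemStage U) : (p.block hU hx).Nonempty :=
  (p.exists_block hU hx).choose_spec.1

theorem start_le_of_mem_block (p : SubsystemStage U) {t : ℕ} (ht : t ∈ p.block hU hx) :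
    p.start ≤ t :=
  (p.exists_block hU hx).choose_spec.2.1 t ht

theorem blockSum_mem_sums (p : SubsystemStage U) : p.blockSum hU hx ∈ p.sums :=
  (p.exists_block hU hx).choose_spec.2.2.1

theorem blockSum_mem_prods (p : SubsystemStage U) : p.blockSum hU hx ∈ p.prods :=
  (p.exists_block hU hx).choose_spec.2.2.2.2

noncomputable def next (p : SubsystemStage U) : SubsystemStage U where
  sums := p.sums ∩ (p.blockSum hU hx + ·) ⁻¹' p.sums
  sums_mem := inter_mem p.sums_mem (p.exists_block hU hx).choose_spec.2.2.2.1
  prods := p.prods ∩ (p.blockSum hU hx * ·) ⁻¹' p.prods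
  isIPStar_prods := p.isIPStar_prods.inter (p.isIPStar_prods.preimage_mul_left _)
  start := (p.block hU hx).max' (p.block_nonempty hU hx) + 1

noncomputable def seq (p : SubsystemStage U) (n : ℕ) : SubsystemStage U :=
  (next hU hx)^[n] p

theorem seq_succ (p : SubsystemStage U) (n : ℕ) :
    p.seq hU hx (n + 1) = (p.seq hU hx n).next hU hx :=
  Function.iterate_succ_apply' _ _ _

theorem max'_block_lt_min'_block_seq_succ (p : SubsystemStage U) (n : ℕ) :
    ((p.seq hU hx n).block hU hx).max' (block_nonempty ..) <
      ((p.seq hU hx (n + 1)).block hU hx).min' (block_nonempty ..) := by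
  have start_succ : (p.seq hU hx (n + 1)).start =
      ((p.seq hU hx n).block hU hx).max' (block_nonempty ..) + 1 := by
    rw [seq_succ]
    rfl
  have start_le_min' := start_le_of_mem_block hU hx _
    (Finset.min'_mem _ (block_nonempty hU hx (p.seq hU hx (n + 1))))
  omega

theorem FS_blockSum_seq_subset (p : SubsystemStage U) :
    FS (fun n => (p.seq hU hx n).blockSum hU hx) ⊆ p.sums := by
  rintro _ ⟨K, hK, rfl⟩
  refine Hindman.FS_drop_subset_of_forall_add_mem (s := fun n => (p.seq hU hx n).sums)
    (fun n => blockSum_mem_sums hU hx _) (fun n => ?_) (fun n m hm => ?_) 0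
    (Hindman.FS.finsetSum _ K hK)
  · rw [seq_succ]
    exact Set.inter_subset_left
  · rw [seq_succ] at hm
    exact hm.2

theorem FP_blockSum_seq_subset (p : SubsystemStage U) :
    FP (fun n => (p.seq hU hx n).blockSum hU hx) ⊆ p.prods := by
  rintro _ ⟨K, hK, rfl⟩
  refine Hindman.FP_drop_subset_of_forall_mul_mem (s := fun n => (p.seq hU hx n).prods)
    (fun n => blockSum_mem_prods hU hx _) (fun n => ?_) (fun n m hm => ?_) 0
    (Hindman.FP.finsetProd _ K hK)
  · rw [seq_succ]
    exact Set.inter_subset_left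
  · rw [seq_succ] at hm
    exact hm.2

end SubsystemStage

theorem ipstar_contains_FS_union_FP_of_sum_subsystem
    (x : ℕ → ℕ) (A : Set ℕ) (hA : IsIPStar A) :
    ∃ y : ℕ → ℕ, IsSumSubsystem y x ∧ FS y ∪ FP y ⊆ A := by
  obtain ⟨U, hU, hx⟩ := Hindman.exists_idempotent_ultrafilter_forall_FS_drop (x : Stream' ℕ)
  let p₀ : SubsystemStage U :=
    ⟨A, isIPStar_iff_forall_idempotent.1 hA U hU, A, hA, 0⟩
  refine ⟨fun n => (p₀.seq hU hx n).blockSum hU hx,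
    ⟨fun n => (p₀.seq hU hx n).block hU hx, fun n => SubsystemStage.block_nonempty hU hx _,
      p₀.max'_block_lt_min'_block_seq_succ hU hx, fun n => rfl⟩,
    Set.union_subset (p₀.FS_blockSum_seq_subset hU hx) (p₀.FP_blockSum_seq_subset hU hx)⟩
end

section
/- Let A be an IP* set in (ℕ,+). Then for any n ∈ ℕ, the set n⁻¹A = {x ∈ ℕ : n·x ∈ A} is also an IP* set in (ℕ,+). -/
theorem ipstar_preimage_mul (A : Set ℕ) (hA : IsIPStar A) (n : ℕ) :
    IsIPStar {x : ℕ | n * x ∈ A} := by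
  intro z
  obtain ⟨a, haA, H, hH, hsum⟩ := hA (fun t => n * z t)
  refine ⟨∑ t ∈ H, z t, ?_, H, hH, rfl⟩
  simpa [Finset.mul_sum, ← hsum] using haA
end

section
/- For every sequence ⟨xₙ⟩_{n=1}^∞ in ℕ there exists an additively idempotent ultrafilter p on ℕ such that FS(⟨xₙ⟩_{n=1}^∞) ∈ p. -/
attribute [local instance] Ultrafilter.add

theorem Hindman.exists_finset_sum_of_mem_FS {M : Type*} [AddCommMonoid M] {a : Stream' M} {m : M}
    (hm : m ∈ Hindman.FS a) : ∃ H : Finset ℕ, H.Nonempty ∧ m = ∑ t ∈ H, a.get t := by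
  induction hm with
  | head' a => exact ⟨{0}, Finset.singleton_nonempty 0, by simp [Stream'.head]⟩
  | tail' a m _ ih =>
    obtain ⟨H, hH, rfl⟩ := ih
    exact ⟨H.map (addRightEmbedding 1), hH.map, by rw [Finset.sum_map]; rfl⟩
  | cons' a m _ ih =>
    obtain ⟨H, -, rfl⟩ := ih
    refine ⟨insert 0 (H.map (addRightEmbedding 1)), Finset.insert_nonempty _ _, ?_⟩
    rw [Finset.sum_insert (by simp), Finset.sum_map]
    rfl

theorem exists_idempotent_ultrafilter_containing_FS (x : ℕ → ℕ) :
    ∃ p : Ultrafilter ℕ, p + p = p ∧ FS x ∈ p := by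
  obtain ⟨p, hp_idem, hp_FS⟩ := Hindman.exists_idempotent_ultrafilter_le_FS (x : Stream' ℕ)
  exact ⟨p, hp_idem, Filter.mem_of_superset hp_FS fun _ => Hindman.exists_finset_sum_of_mem_FS⟩
end

section
/- Let A be an IP* set in (ℕ,+), let ⟨xₙ⟩_{n=1}^∞ be a sequence in ℕ, and let p be an additively idempotent ultrafilter on ℕ containing FS(⟨xₙ⟩_{n=1}^∞). Then there exists a sum subsystem ⟨yₙ⟩_{n=1}^∞ of ⟨xₙ⟩_{n=1}^∞ such that FS(⟨yₙ⟩_{n=1}^∞) ∪ FP(⟨yₙ⟩_{n=1}^∞) ⊆ A and, moreover, for every t ∈ FS(⟨yₙ⟩_{n=1}^∞) the set {x ∈ ℕ : t + x ∈ A} belongs to p. -/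
attribute [local instance] Ultrafilter.add

namespace IPAux

open Filter

/-- Tail finite-sum sets: sums over nonempty blocks contained in `[M, ∞)`. -/
def Tail (x : ℕ → ℕ) (M : ℕ) : Set ℕ :=
  {m | ∃ H : Finset ℕ, H.Nonempty ∧ (∀ t ∈ H, M ≤ t) ∧ m = ∑ t ∈ H, x t}

theorem Tail_mono (x : ℕ → ℕ) {M M' : ℕ} (h : M ≤ M') : Tail x M' ⊆ Tail x M := by
  rintro m ⟨H, hne, hH, rfl⟩
  exact ⟨H, hne, fun t ht => le_trans h (hH t ht), rfl⟩

theorem Tail_nonempty (x : ℕ → ℕ) (M : ℕ) : (Tail x M).Nonempty :=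
  ⟨x M, {M}, Finset.singleton_nonempty M, by simp, by simp⟩

theorem FS_eq_Tail_zero (x : ℕ → ℕ) : FS x = Tail x 0 := by
  ext m
  constructor
  · rintro ⟨H, hne, rfl⟩; exact ⟨H, hne, fun t _ => Nat.zero_le t, rfl⟩
  · rintro ⟨H, hne, _, rfl⟩; exact ⟨H, hne, rfl⟩

/-- Adding a sufficiently deep tail element to a tail element stays in the tail set. -/
theorem Tail_add (x : ℕ → ℕ) {M : ℕ} {u : ℕ} (hu : u ∈ Tail x M) :
    ∃ W : ℕ, ∀ v ∈ Tail x W, u + v ∈ Tail x M := by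
  obtain ⟨H, hne, hH, rfl⟩ := hu
  refine ⟨H.sup id + 1, ?_⟩
  rintro v ⟨H', hne', hH', rfl⟩
  have hd : Disjoint H H' := by
    rw [Finset.disjoint_left]
    intro a haH haH'
    have h1 : a ≤ H.sup id := Finset.le_sup (f := id) haH
    have h2 : H.sup id + 1 ≤ a := hH' a haH'
    omega
  refine ⟨H ∪ H', Finset.Nonempty.mono Finset.subset_union_left hne, ?_, ?_⟩
  · intro t ht
    rcases Finset.mem_union.mp ht with h | h
    · exact hH t h
    · have := hH' t h
      have h2 : ∀ b ∈ H, M ≤ b := hH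
      rcases hne with ⟨a, ha⟩
      have : H.sup id + 1 ≤ t := hH' t h
      have : M ≤ a := hH a ha
      have : a ≤ H.sup id := Finset.le_sup (f := id) ha
      omega
  · rw [Finset.sum_union hd]

/-- Membership in a sum of ultrafilters. -/
theorem mem_add_iff {p q : Ultrafilter ℕ} {A : Set ℕ} :
    A ∈ p + q ↔ {a : ℕ | {b : ℕ | a + b ∈ A} ∈ q} ∈ p := by
  have h := Ultrafilter.eventually_add p q (· ∈ A)
  simp only [Filter.eventually_iff, Ultrafilter.mem_coe] at h
  simpa using h

theorem pure_add_pure (a b : ℕ) : (pure a : Ultrafilter ℕ) + pure b = pure (a + b) := by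
  apply Ultrafilter.coe_injective
  apply Filter.ext
  intro s
  simp only [Ultrafilter.mem_coe, mem_add_iff, Ultrafilter.mem_pure]
  simp

theorem add_assoc' (U V W : Ultrafilter ℕ) : U + V + W = U + (V + W) :=
  Ultrafilter.coe_inj.mp <| Filter.ext' fun p => by
    simp [Ultrafilter.eventually_add, Nat.add_assoc]


/-- Every member of an additively idempotent ultrafilter contains an FS set. -/
theorem exists_FS_subset_of_mem {q : Ultrafilter ℕ} (hq : q + q = q) {E : Set ℕ}
    (hE : E ∈ q) : ∃ z : ℕ → ℕ, FS z ⊆ E := by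
  obtain ⟨a, ha⟩ := Hindman.exists_FS_of_large q hq E hE
  refine ⟨a.get, ?_⟩
  rintro m ⟨H, hne, rfl⟩
  exact ha (Hindman.FS.finset_sum a H hne)

/-- An IP* set belongs to every additively idempotent ultrafilter. -/
theorem ipstar_mem {A : Set ℕ} (hA : IsIPStar A) {q : Ultrafilter ℕ} (hq : q + q = q) :
    A ∈ q := by
  by_contra h
  have hc : Aᶜ ∈ q := Ultrafilter.compl_mem_iff_notMem.mpr h
  obtain ⟨z, hz⟩ := exists_FS_subset_of_mem hq hc
  obtain ⟨w, hwA, hwFS⟩ := hA z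
  exact hz hwFS hwA

/-- Scaled IP* sets: `{v | b * v ∈ A}` is IP* whenever `A` is. -/
theorem ipstar_smul {A : Set ℕ} (hA : IsIPStar A) (b : ℕ) :
    IsIPStar {v : ℕ | b * v ∈ A} := by
  intro z
  obtain ⟨w, hwA, H, hne, rfl⟩ := hA (fun n => b * z n)
  refine ⟨∑ t ∈ H, z t, ?_, H, hne, rfl⟩
  simpa [Finset.mul_sum] using hwA

theorem eq_pure_of_singleton_mem {p : Ultrafilter ℕ} {a : ℕ} (h : {a} ∈ p) :
    p = pure a := by
  obtain ⟨b, hb, hpb⟩ := Ultrafilter.eq_pure_of_finite_mem (Set.finite_singleton a) h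
  rwa [Set.mem_singleton_iff.mp hb] at hpb


/-- An idempotent principal ultrafilter is `pure 0`; so if `p ≠ pure 0` is idempotent then
no singleton belongs to `p`. -/
theorem not_singleton_mem {p : Ultrafilter ℕ} (hp : p + p = p) (hp0 : p ≠ pure 0) (a : ℕ) :
    {a} ∉ p := by
  intro h
  have hpa := eq_pure_of_singleton_mem h
  rw [hpa, pure_add_pure] at hp
  have h2 : ({a} : Set ℕ) ∈ (pure (a + a) : Ultrafilter ℕ) := by
    rw [hp]; exact Ultrafilter.mem_pure.mpr rfl
  have : a + a = a := Set.mem_singleton_iff.mp (Ultrafilter.mem_pure.mp h2)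
  have : a = 0 := by omega
  exact hp0 (this ▸ hpa)


theorem mem_congr {p : Ultrafilter ℕ} {U S T : Set ℕ} (hU : U ∈ p)
    (h : ∀ w ∈ U, w ∈ S ↔ w ∈ T) : S ∈ p ↔ T ∈ p := by
  constructor
  · intro hS
    exact Filter.mem_of_superset (Filter.inter_mem hU hS) fun w hw => (h w hw.1).mp hw.2
  · intro hT
    exact Filter.mem_of_superset (Filter.inter_mem hU hT) fun w hw => (h w hw.1).mpr hw.2

/-- The key shift property: if `p` is idempotent and concentrated on `[s,∞)`, then the
translated ultrafilter `map (· - s) p` is fixed by right addition of `p`. -/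
theorem map_sub_mem_add_iff {p : Ultrafilter ℕ} (hp : p + p = p) {s : ℕ}
    (hs : {w : ℕ | s ≤ w} ∈ p) (B : Set ℕ) :
    {u : ℕ | {v : ℕ | u + v ∈ B} ∈ p} ∈ Ultrafilter.map (· - s) p ↔
      B ∈ Ultrafilter.map (· - s) p := by
  set B' : Set ℕ := {m | s ≤ m ∧ m - s ∈ B} with hB'
  have h1 : B ∈ Ultrafilter.map (· - s) p ↔ B' ∈ p := by
    rw [Ultrafilter.mem_map]
    exact mem_congr hs fun w hw => by
      simp only [Set.mem_preimage, hB', Set.mem_setOf_eq]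
      exact ⟨fun h => ⟨hw, h⟩, fun h => h.2⟩
  have h2 : {u : ℕ | {v : ℕ | u + v ∈ B} ∈ p} ∈ Ultrafilter.map (· - s) p ↔
      {w : ℕ | {v : ℕ | w + v ∈ B'} ∈ p} ∈ p := by
    rw [Ultrafilter.mem_map]
    refine mem_congr hs fun w hw => ?_
    simp only [Set.mem_preimage, Set.mem_setOf_eq]
    have hset : {v : ℕ | w - s + v ∈ B} = {v : ℕ | w + v ∈ B'} := by
      ext v
      simp only [Set.mem_setOf_eq, hB']
      have hsw : s ≤ w := hw
      have : w - s + v = w + v - s := by omega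
      rw [this]
      constructor
      · intro h; exact ⟨by omega, h⟩
      · intro h; exact h.2
    rw [hset]
  have h3 : {w : ℕ | {v : ℕ | w + v ∈ B'} ∈ p} ∈ p ↔ B' ∈ p := by
    conv_rhs => rw [← hp]
    exact mem_add_iff.symm
  rw [h1, h2, h3]

/-- Cell lemma: for each `M` some translate of `Tail x M` is `p`-large. -/
theorem exists_cell {x : ℕ → ℕ} {p : Ultrafilter ℕ} (hp : p + p = p) (hp0 : p ≠ pure 0)
    (hFS : FS x ∈ p) (M : ℕ) : ∃ s : ℕ, ((s + ·) '' Tail x M) ∈ p := by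
  have hcov : FS x ⊆ ⋃ F ∈ (((Finset.range M).powerset : Finset (Finset ℕ)) : Set (Finset ℕ)),
      ((((∑ t ∈ F, x t) + ·) '' Tail x M) ∪ {∑ t ∈ F, x t}) := by
    rintro w ⟨H, hne, rfl⟩
    apply Set.mem_biUnion (show H ∩ Finset.range M ∈ _ from
      Finset.mem_coe.mpr (Finset.mem_powerset.mpr Finset.inter_subset_right))
    have hsplit : ∑ t ∈ H, x t = ∑ t ∈ H ∩ Finset.range M, x t + ∑ t ∈ H \ Finset.range M, x t := by
      rw [← Finset.sum_union (Finset.disjoint_sdiff_inter H (Finset.range M)).symm]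
      congr 1
      rw [Finset.union_comm]
      exact (Finset.sdiff_union_inter H (Finset.range M)).symm
    rcases (H \ Finset.range M).eq_empty_or_nonempty with hD | hD
    · right
      simp only [Set.mem_singleton_iff, hsplit, hD, Finset.sum_empty, add_zero]
    · left
      refine ⟨∑ t ∈ H \ Finset.range M, x t, ⟨H \ Finset.range M, hD, ?_, rfl⟩, hsplit.symm⟩
      intro t ht
      have := (Finset.mem_sdiff.mp ht).2
      simpa using this
  have hU : (⋃ F ∈ (((Finset.range M).powerset : Finset (Finset ℕ)) : Set (Finset ℕ)),
      ((((∑ t ∈ F, x t) + ·) '' Tail x M) ∪ {∑ t ∈ F, x t})) ∈ p :=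
    Filter.mem_of_superset hFS hcov
  obtain ⟨F, _, hF⟩ := (Ultrafilter.finite_biUnion_mem_iff (Finset.finite_toSet _)).mp hU
  rcases Ultrafilter.union_mem_iff.mp hF with h | h
  · exact ⟨∑ t ∈ F, x t, h⟩
  · exact absurd h (not_singleton_mem hp hp0 _)


theorem star_mem {q₀ : Ultrafilter ℕ} (hq : q₀ + q₀ = q₀) {D : Set ℕ} (hD : D ∈ q₀) :
    {v : ℕ | {u : ℕ | v + u ∈ D} ∈ q₀} ∈ q₀ := by
  have h : D ∈ q₀ + q₀ := by rw [hq]; exact hD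
  exact mem_add_iff.mp h

/-- Values of blocks. -/
def vals (x : ℕ → ℕ) (f : ℕ → Finset ℕ) (i : ℕ) : ℕ := ∑ t ∈ f i, x t

/-- The invariant of the recursion after `n` blocks have been chosen. -/
def Inv (x : ℕ → ℕ) (A At : Set ℕ) (q₀ : Ultrafilter ℕ) (n : ℕ) (f : ℕ → Finset ℕ) : Prop :=
  (∀ i, i < n → (f i).Nonempty) ∧
  (∀ i j, i < j → j < n → ∀ a ∈ f i, ∀ b ∈ f j, a < b) ∧
  (∀ G : Finset ℕ, G.Nonempty → (∀ i ∈ G, i < n) →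
    (∑ i ∈ G, vals x f i) ∈ At ∧ {v : ℕ | (∑ i ∈ G, vals x f i) + v ∈ At} ∈ q₀ ∧
      (∏ i ∈ G, vals x f i) ∈ A)

theorem step (x : ℕ → ℕ) (A At : Set ℕ) (q₀ : Ultrafilter ℕ)
    (hq : q₀ + q₀ = q₀) (htails : ∀ M, Tail x M ∈ q₀)
    (hAt : At ∈ q₀) (hAtstar : {v : ℕ | {u : ℕ | v + u ∈ At} ∈ q₀} ∈ q₀) (hTA : At ⊆ A)
    (hprod : ∀ b : ℕ, {v : ℕ | b * v ∈ A} ∈ q₀)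
    (n : ℕ) (f : ℕ → Finset ℕ) (hf : Inv x A At q₀ n f) :
    ∃ g : ℕ → Finset ℕ, (∀ i, i < n → g i = f i) ∧ Inv x A At q₀ (n + 1) g := by
  classical
  obtain ⟨hne, hord, hsums⟩ := hf
  set Mx : ℕ := ((Finset.range n).sup (fun i => (f i).sup id)) + 1 with hMx
  set 𝒢 : Finset (Finset ℕ) := (Finset.range n).powerset.filter (fun G => G ≠ ∅) with h𝒢
  have h𝒢mem : ∀ G ∈ 𝒢, G.Nonempty ∧ ∀ i ∈ G, i < n := by
    intro G hG
    rw [h𝒢, Finset.mem_filter, Finset.mem_powerset] at hG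
    exact ⟨Finset.nonempty_iff_ne_empty.mpr hG.2,
      fun i hi => Finset.mem_range.mp (hG.1 hi)⟩
  set pick : Finset ℕ → Set ℕ := fun G =>
    {v : ℕ | (∑ i ∈ G, vals x f i) + v ∈ At} ∩
      ({v : ℕ | {u : ℕ | ((∑ i ∈ G, vals x f i) + v) + u ∈ At} ∈ q₀} ∩
        {v : ℕ | (∏ i ∈ G, vals x f i) * v ∈ A}) with hpick
  have hpickmem : ∀ G ∈ 𝒢, pick G ∈ q₀ := by
    intro G hG
    obtain ⟨hGne, hGlt⟩ := h𝒢mem G hG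
    obtain ⟨h1, h2, h3⟩ := hsums G hGne hGlt
    refine Filter.inter_mem h2 (Filter.inter_mem ?_ (hprod _))
    have hstar := star_mem hq h2
    have heq : {v : ℕ | {u : ℕ | v + u ∈ {w : ℕ | (∑ i ∈ G, vals x f i) + w ∈ At}} ∈ q₀} =
        {v : ℕ | {u : ℕ | ((∑ i ∈ G, vals x f i) + v) + u ∈ At} ∈ q₀} := by
      ext v
      have hin : {u : ℕ | v + u ∈ {w : ℕ | (∑ i ∈ G, vals x f i) + w ∈ At}} =
          {u : ℕ | ((∑ i ∈ G, vals x f i) + v) + u ∈ At} := by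
        ext u
        simp only [Set.mem_setOf_eq, Nat.add_assoc]
      simp only [Set.mem_setOf_eq, hin]
      simp only [← Nat.add_assoc]
    rwa [heq] at hstar
  have hX : (At ∩ {v : ℕ | {u : ℕ | v + u ∈ At} ∈ q₀}) ∩
      (Tail x Mx ∩ ⋂ G ∈ 𝒢, pick G) ∈ q₀ := by
    refine Filter.inter_mem (Filter.inter_mem hAt hAtstar)
      (Filter.inter_mem (htails Mx) ?_)
    exact (Filter.biInter_finset_mem 𝒢).mpr hpickmem
  obtain ⟨v, hv⟩ := Ultrafilter.nonempty_of_mem hX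
  obtain ⟨⟨hvAt, hvstar⟩, hvTail, hvpick⟩ := hv
  obtain ⟨hblk, hblkne, hblkge, hblkeq⟩ := hvTail
  have hvpick' : ∀ G ∈ 𝒢, v ∈ pick G := by
    intro G hG
    exact Set.mem_iInter₂.mp hvpick G hG
  refine ⟨Function.update f n hblk, fun i hi => Function.update_of_ne (Nat.ne_of_lt hi) _ _, ?_, ?_, ?_⟩
  · -- nonempty blocks
    intro i hi
    rcases Nat.lt_succ_iff_lt_or_eq.mp hi with h | h
    · rw [Function.update_of_ne (Nat.ne_of_lt h)]; exact hne i h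
    · rw [h, Function.update_self]; exact hblkne
  · -- ordering
    intro i j hij hj a ha b hb
    rcases Nat.lt_succ_iff_lt_or_eq.mp hj with h | h
    · rw [Function.update_of_ne (show i ≠ n by omega)] at ha
      rw [Function.update_of_ne (show j ≠ n by omega)] at hb
      exact hord i j hij h a ha b hb
    · have hin : i ≠ n := by omega
      rw [Function.update_of_ne hin] at ha
      rw [h, Function.update_self] at hb
      have h1 : a ≤ (f i).sup id := Finset.le_sup (f := id) ha
      have h2 : (f i).sup id ≤ (Finset.range n).sup (fun i => (f i).sup id) :=
        Finset.le_sup (f := fun i => (f i).sup id) (Finset.mem_range.mpr (show i < n by omega))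
      have h3 : Mx ≤ b := hblkge b hb
      omega
  · -- sums and products
    intro G hGne hGlt
    have hvals : ∀ i ∈ G, i ≠ n → vals x (Function.update f n hblk) i = vals x f i := by
      intro i _ hi
      unfold vals
      rw [Function.update_of_ne hi]
    have hvaln : vals x (Function.update f n hblk) n = v := by
      unfold vals
      rw [Function.update_self, hblkeq]
    by_cases hn : n ∈ G
    · set G' := G.erase n with hG'
      have hsum : ∑ i ∈ G, vals x (Function.update f n hblk) i
          = v + ∑ i ∈ G', vals x f i := by
        rw [← Finset.add_sum_erase _ _ hn, hvaln]
        congr 1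
        refine Finset.sum_congr rfl fun i hi => ?_
        exact hvals i (Finset.mem_of_mem_erase hi) (Finset.ne_of_mem_erase hi)
      have hprodeq : ∏ i ∈ G, vals x (Function.update f n hblk) i
          = v * ∏ i ∈ G', vals x f i := by
        rw [← Finset.mul_prod_erase _ _ hn, hvaln]
        congr 1
        refine Finset.prod_congr rfl fun i hi => ?_
        exact hvals i (Finset.mem_of_mem_erase hi) (Finset.ne_of_mem_erase hi)
      rcases G'.eq_empty_or_nonempty with hG'e | hG'ne
      · rw [hsum, hprodeq, hG'e]
        simp only [Finset.sum_empty, Finset.prod_empty, Nat.add_zero, Nat.mul_one]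
        exact ⟨hvAt, hvstar, hTA hvAt⟩
      · have hG'𝒢 : G' ∈ 𝒢 := by
          rw [h𝒢, Finset.mem_filter, Finset.mem_powerset]
          constructor
          · intro i hi
            have h1 := hGlt i (Finset.mem_of_mem_erase hi)
            have h2 := Finset.ne_of_mem_erase hi
            exact Finset.mem_range.mpr (by omega)
          · exact Finset.nonempty_iff_ne_empty.mp hG'ne
        obtain ⟨hp1, hp2, hp3⟩ := hvpick' G' hG'𝒢
        rw [hsum, hprodeq]
        refine ⟨?_, ?_, ?_⟩
        · rw [Nat.add_comm]; exact hp1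
        · rw [Nat.add_comm]; exact hp2
        · rw [Nat.mul_comm]; exact hp3
    · have hGlt' : ∀ i ∈ G, i < n := by
        intro i hi
        have := hGlt i hi
        have : i ≠ n := fun h => hn (h ▸ hi)
        omega
      have hsum : ∑ i ∈ G, vals x (Function.update f n hblk) i = ∑ i ∈ G, vals x f i :=
        Finset.sum_congr rfl fun i hi => hvals i hi (by intro h; exact hn (h ▸ hi))
      have hprodeq : ∏ i ∈ G, vals x (Function.update f n hblk) i = ∏ i ∈ G, vals x f i :=
        Finset.prod_congr rfl fun i hi => hvals i hi (by intro h; exact hn (h ▸ hi))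
      rw [hsum, hprodeq]
      exact hsums G hGne hGlt'


theorem mem_ubind {u : Ultrafilter ℕ} {m : ℕ → Ultrafilter ℕ} {s : Set ℕ} :
    s ∈ u.bind m ↔ {M | s ∈ m M} ∈ u := by
  change s ∈ Filter.bind (↑u) (fun x => ↑(m x)) ↔ _
  rw [Filter.mem_bind']
  rfl

/-- There exists an ultrafilter containing all tails and fixed by right addition of `p`. -/
theorem exists_good {x : ℕ → ℕ} {p : Ultrafilter ℕ} (hp : p + p = p) (hFS : FS x ∈ p) :
    ∃ q : Ultrafilter ℕ, (∀ M, Tail x M ∈ q) ∧ q + p = q := by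
  by_cases hp0 : p = pure 0
  · -- take any ultrafilter containing all tails
    have hne : ∀ M, Filter.NeBot (𝓟 (Tail x M)) := fun M =>
      Filter.principal_neBot_iff.mpr (Tail_nonempty x M)
    have hdir : Directed (· ≥ ·) (fun M => 𝓟 (Tail x M)) := by
      intro M M'
      exact ⟨max M M', Filter.principal_mono.mpr (Tail_mono x (le_max_left _ _)),
        Filter.principal_mono.mpr (Tail_mono x (le_max_right _ _))⟩
    have : Filter.NeBot (⨅ M, 𝓟 (Tail x M)) := Filter.iInf_neBot_of_directed hdir hne
    obtain ⟨q, hq⟩ := Ultrafilter.exists_le (⨅ M, 𝓟 (Tail x M))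
    refine ⟨q, fun M => hq (Filter.mem_iInf_of_mem M (Filter.mem_principal_self _)), ?_⟩
    subst hp0
    apply Ultrafilter.coe_injective
    apply Filter.ext
    intro A
    simp only [Ultrafilter.mem_coe, mem_add_iff, Ultrafilter.mem_pure]
    simp
  · -- limit of shifted ultrafilters
    have hcell := fun M => exists_cell hp hp0 hFS M
    set s : ℕ → ℕ := fun M => (hcell M).choose with hs_def
    have hsp : ∀ M, ((s M + ·) '' Tail x M) ∈ p := fun M => (hcell M).choose_spec
    have hge : ∀ M, {w : ℕ | s M ≤ w} ∈ p := by
      intro M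
      refine Filter.mem_of_superset (hsp M) ?_
      rintro w ⟨e, _, rfl⟩
      simp
    set rM : ℕ → Ultrafilter ℕ := fun M => Ultrafilter.map (· - s M) p with hrM_def
    obtain ⟨U, hU⟩ := Ultrafilter.exists_le (Filter.atTop : Filter ℕ)
    refine ⟨U.bind rM, ?_, ?_⟩
    · intro M
      rw [mem_ubind]
      have : {M' : ℕ | M ≤ M'} ⊆ {M' | Tail x M ∈ rM M'} := by
        intro M' hM'
        simp only [Set.mem_setOf_eq, hrM_def, Ultrafilter.mem_map]
        refine Filter.mem_of_superset (hsp M') ?_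
        rintro w ⟨e, he, rfl⟩
        simp only [Set.mem_preimage, Nat.add_sub_cancel_left]
        exact Tail_mono x hM' he
      exact Filter.mem_of_superset (hU (Filter.mem_atTop M)) this
    · apply Ultrafilter.coe_injective
      apply Filter.ext
      intro A
      simp only [Ultrafilter.mem_coe]
      rw [mem_add_iff, mem_ubind, mem_ubind]
      apply Iff.intro <;> intro h <;>
        [ (exact Filter.mem_of_superset h (fun M hM => (map_sub_mem_add_iff hp (hge M) A).mp hM));
          (exact Filter.mem_of_superset h (fun M hM => (map_sub_mem_add_iff hp (hge M) A).mpr hM))]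

/-- An idempotent ultrafilter containing all tails and fixed by right addition of `p`. -/
theorem exists_good_idem {x : ℕ → ℕ} {p : Ultrafilter ℕ} (hp : p + p = p) (hFS : FS x ∈ p) :
    ∃ q : Ultrafilter ℕ, q + q = q ∧ q + p = q ∧ ∀ M, Tail x M ∈ q := by
  classical
  set S : Set (Ultrafilter ℕ) := {q | (∀ M, Tail x M ∈ q) ∧ q + p = q} with hS_def
  obtain ⟨q₁, hq₁⟩ := exists_good hp hFS
  have hSne : S.Nonempty := ⟨q₁, hq₁⟩
  have hSclosed : IsClosed S := by
    have : S = (⋂ M, {q : Ultrafilter ℕ | Tail x M ∈ q}) ∩ {q | q + p = q} := by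
      ext q; simp [hS_def, Set.mem_iInter]
    rw [this]
    exact IsClosed.inter (isClosed_iInter fun M => ultrafilter_isClosed_basic _)
      (isClosed_eq (Ultrafilter.continuous_add_left p) continuous_id)
  have hSadd : ∀ q ∈ S, ∀ q' ∈ S, q + q' ∈ S := by
    rintro q ⟨hqT, hqp⟩ q' ⟨hq'T, hq'p⟩
    constructor
    · intro M
      rw [mem_add_iff]
      refine Filter.mem_of_superset (hqT M) ?_
      intro u hu
      obtain ⟨W, hW⟩ := Tail_add x hu
      exact Filter.mem_of_superset (hq'T W) fun v hv => hW v hv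
    · rw [add_assoc', hq'p]
  have key : ∃ q₀ ∈ S, q₀ + q₀ = q₀ := by
    letI : AddSemigroup (Ultrafilter ℕ) := Ultrafilter.addSemigroup
    refine exists_idempotent_in_compact_add_subsemigroup
      (fun r => Ultrafilter.continuous_add_left r) S hSne hSclosed.isCompact ?_
    exact hSadd
  obtain ⟨q₀, hq₀S, hq₀⟩ := key
  exact ⟨q₀, hq₀, hq₀S.2, hq₀S.1⟩


theorem main_construction (A : Set ℕ) (hA : IsIPStar A) (x : ℕ → ℕ) (p q₀ : Ultrafilter ℕ)
    (hq : q₀ + q₀ = q₀) (hqp : q₀ + p = q₀) (htails : ∀ M, Tail x M ∈ q₀) :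
    ∃ y : ℕ → ℕ, IsSumSubsystem y x ∧ FS y ∪ FP y ⊆ A ∧
      ∀ t ∈ FS y, {z : ℕ | t + z ∈ A} ∈ p := by
  classical
  set At : Set ℕ := A ∩ {n : ℕ | {z : ℕ | n + z ∈ A} ∈ p} with hAt_def
  have hTA : At ⊆ A := fun n hn => hn.1
  have hshift : ∀ n ∈ At, {z : ℕ | n + z ∈ A} ∈ p := fun n hn => hn.2
  have hAq : A ∈ q₀ := ipstar_mem hA hq
  have hAtq : At ∈ q₀ := by
    have h1 : A ∈ q₀ + p := by rw [hqp]; exact hAq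
    exact Filter.inter_mem hAq (mem_add_iff.mp h1)
  have hAtstar := star_mem hq hAtq
  have hprod : ∀ b : ℕ, {v : ℕ | b * v ∈ A} ∈ q₀ := fun b => ipstar_mem (ipstar_smul hA b) hq
  have hInv0 : Inv x A At q₀ 0 (fun _ => ∅) := by
    refine ⟨fun i hi => absurd hi (by omega), fun i j hij hj => absurd hj (by omega), ?_⟩
    intro G hGne hGlt
    obtain ⟨i, hi⟩ := hGne
    exact absurd (hGlt i hi) (Nat.not_lt_zero i)
  have hstep := step x A At q₀ hq htails hAtq hAtstar hTA hprod
  choose F hF1 hF2 using hstep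
  let S : ∀ n : ℕ, {f : ℕ → Finset ℕ // Inv x A At q₀ n f} :=
    fun n => Nat.rec (motive := fun n => {f : ℕ → Finset ℕ // Inv x A At q₀ n f})
      ⟨fun _ => ∅, hInv0⟩ (fun m ih => ⟨F m ih.1 ih.2, hF2 m ih.1 ih.2⟩) n
  have hSsucc : ∀ n, (S (n + 1)).1 = F n (S n).1 (S n).2 := fun n => rfl
  have hstab : ∀ m n, n ≤ m → ∀ i, i < n → (S m).1 i = (S n).1 i := by
    intro m
    induction m with
    | zero => intro n hn i hi; omega
    | succ m ih =>
      intro n hn i hi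
      rcases Nat.lt_succ_iff_lt_or_eq.mp (Nat.lt_succ_of_le hn) with h | h
      · have h1 : (S (m + 1)).1 i = (S m).1 i := by
          rw [hSsucc m]
          exact hF1 m (S m).1 (S m).2 i (by omega)
        rw [h1]
        exact ih n (by omega) i hi
      · rw [h]
  set H : ℕ → Finset ℕ := fun n => (S (n + 1)).1 n with hH_def
  set y : ℕ → ℕ := fun n => ∑ t ∈ H n, x t with hy_def
  have hHs : ∀ m n, n < m → (S m).1 n = H n := by
    intro m n h
    rw [hstab m (n + 1) h n (Nat.lt_succ_self n)]
  have hHne : ∀ n, (H n).Nonempty := fun n => (S (n + 1)).2.1 n (Nat.lt_succ_self n)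
  have hord : ∀ n, ∀ a ∈ H n, ∀ b ∈ H (n + 1), a < b := by
    intro n a ha b hb
    have h1 := hHs (n + 2) n (by omega)
    have h2 := hHs (n + 2) (n + 1) (by omega)
    exact (S (n + 2)).2.2.1 n (n + 1) (by omega) (by omega) a (h1 ▸ ha) b (h2 ▸ hb)
  have hkey : ∀ G : Finset ℕ, G.Nonempty →
      (∑ i ∈ G, y i) ∈ At ∧ (∏ i ∈ G, y i) ∈ A := by
    intro G hGne
    set m : ℕ := G.sup id + 1 with hm
    have hlt : ∀ i ∈ G, i < m := by
      intro i hi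
      have := Finset.le_sup (f := id) hi
      simp only [id] at this
      omega
    have h := (S m).2.2.2 G hGne hlt
    have hsum : ∑ i ∈ G, vals x (S m).1 i = ∑ i ∈ G, y i := by
      refine Finset.sum_congr rfl fun i hi => ?_
      unfold vals
      rw [hHs m i (hlt i hi)]
    have hprodeq : ∏ i ∈ G, vals x (S m).1 i = ∏ i ∈ G, y i := by
      refine Finset.prod_congr rfl fun i hi => ?_
      unfold vals
      rw [hHs m i (hlt i hi)]
    rw [hsum, hprodeq] at h
    exact ⟨h.1, h.2.2⟩
  refine ⟨y, ⟨H, hHne, ?_, fun n => rfl⟩, ?_, ?_⟩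
  · intro n
    exact hord n _ (Finset.max'_mem _ _) _ (Finset.min'_mem _ _)
  · rintro t (⟨G, hGne, rfl⟩ | ⟨G, hGne, rfl⟩)
    · exact hTA (hkey G hGne).1
    · exact (hkey G hGne).2
  · rintro t ⟨G, hGne, rfl⟩
    exact hshift _ (hkey G hGne).1

end IPAux

theorem exists_sum_subsystem_FS_FP_subset_and_shifts_in_ultrafilter
    (A : Set ℕ) (hA : IsIPStar A) (x : ℕ → ℕ) (p : Ultrafilter ℕ)
    (hp : p + p = p) (hFS : FS x ∈ p) :
    ∃ y : ℕ → ℕ, IsSumSubsystem y x ∧ FS y ∪ FP y ⊆ A ∧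
      ∀ t ∈ FS y, {z : ℕ | t + z ∈ A} ∈ p := by
  obtain ⟨q₀, hq, hqp, htails⟩ := IPAux.exists_good_idem hp hFS
  exact IPAux.main_construction A hA x p q₀ hq hqp htails
end
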